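/- Let K = HahnSeries ℝ ℂ be the field of generalized Laurent series with complex coefficients and real exponents, and for λ ∈ ℝ write s^λ ∈ K for the monomial HahnSeries.single λ 1 (so s = s¹). Let n and k be integers with 0 ≤ k and k+2 ≤ n, let λ be a real number with 0 < λ < (n−k−1)/(n+1), and let Q ∈ K[X] be the polynomial Q = X^{n−k}·(X + C(s^{−λ})·X^{n−k})^{k+1} − C(s), where C denotes the constant-coefficient embedding K → K[X]. Suppose Q splits into linear factors over K. Then, counted with multiplicity, exactly n+1 of the roots of Q in K have ord equal to 1/(n+1) and exactly (n−k−1)(k+1) of the roots have ord equal to λ/(n−k−1), where ord(z) denotes the smallest exponent in the support of a nonzero z ∈ K; in particular deg Q = (n−k)(k+2) = (n+1) + (n−k−1)(k+1) and 0 is not a root of Q. -/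

import Mathlib

open HahnSeries Polynomial

open scoped Classical

/-- The field of generalized Laurent series with complex coefficients and real exponents. -/
abbrev GenLaurent : Type := HahnSeries ℝ ℂ

/-- The monomial `s^λ`. -/
noncomputable def sPow (l : ℝ) : GenLaurent := HahnSeries.single l (1 : ℂ)

/-!
A root `z` of `z^m (z + c z^m)^j = t` is nonzero, and comparing `ord z` with `ord (c z^m)` leaves
two possibilities: either `z` dominates, so `(m + j) ord z = ord t`, or the two terms balance, so
`(m - 1) ord z = -ord c`. The third one, `c z^m` dominating, contradicts the hypothesis on `λ`.
Since the polynomial splits, Vieta's formula for the constant coefficient gives the sum of the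
orders of all `m (j + 1)` roots, namely `ord t - j ord c`. Knowing the number of roots and the sum
of their orders, each of which takes one of two distinct values, determines how many roots have
each order.
-/

namespace HahnSeries

variable {Γ R : Type*}

theorem order_add_of_order_lt [Zero Γ] [LinearOrder Γ] [AddMonoid R] {x y : R⟦Γ⟧} (hx : x ≠ 0)
    (h : x.order < y.order) : (x + y).order = x.order := by
  have hc : (x + y).coeff x.order ≠ 0 := by
    rwa [coeff_add, coeff_eq_zero_of_lt_order h, add_zero, Ne, coeff_order_eq_zero]
  have hxy : x + y ≠ 0 := fun h0 => hc (by simp [h0])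
  refine le_antisymm (order_le_of_coeff_ne_zero hc) ?_
  simpa [min_eq_left h.le] using min_order_le_order_add hxy

theorem order_multiset_prod [AddCommMonoid Γ] [LinearOrder Γ] [IsOrderedCancelAddMonoid Γ]
    [CommSemiring R] [NoZeroDivisors R] [Nontrivial R] {s : Multiset R⟦Γ⟧}
    (hs : (0 : R⟦Γ⟧) ∉ s) : s.prod.order = (s.map order).sum := by
  induction s using Multiset.induction with
  | empty => simp
  | cons a s ih =>
    rw [Multiset.mem_cons, not_or] at hs
    rw [Multiset.prod_cons, order_mul (Ne.symm hs.1) (Multiset.prod_ne_zero hs.2),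
      Multiset.map_cons, Multiset.sum_cons, ih hs.2]

theorem order_mul_eq_or_of_pow_mul_add_pow_eq [Semiring R] [NoZeroDivisors R] {m j : ℕ}
    {z c t : R⟦ℝ⟧} (hz : z ≠ 0) (hc : c ≠ 0) (ht : t ≠ 0)
    (hregime : -c.order * (m + j) < (m - 1) * t.order) (h : z ^ m * (z + c * z ^ m) ^ j = t) :
    z.order * (m + j) = t.order ∨ z.order * (m - 1) = -c.order := by
  have hzm : z ^ m ≠ 0 := pow_ne_zero _ hz
  have hw : (z + c * z ^ m) ^ j ≠ 0 := right_ne_zero_of_mul (h ▸ ht)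
  have hcz : (c * z ^ m).order = c.order + m * z.order := by
    rw [order_mul hc hzm, order_pow, nsmul_eq_mul]
  have hto : t.order = m * z.order + j * (z + c * z ^ m).order := by
    rw [← h, order_mul hzm hw, order_pow, order_pow, nsmul_eq_mul, nsmul_eq_mul]
  rcases lt_trichotomy (-c.order) ((m - 1) * z.order) with hz_dom | hbalanced | hcz_dom
  · rw [order_add_of_order_lt hz (by linarith)] at hto
    left
    linarith
  · right
    linarith
  · rw [add_comm z, order_add_of_order_lt (mul_ne_zero hc hzm) (by linarith), hcz] at hto
    have := mul_le_mul_of_nonneg_left hcz_dom.le (by positivity : (0 : ℝ) ≤ m * (j + 1))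
    rw [hto] at hregime
    linarith

end HahnSeries

theorem Polynomial.Splits.sum_order_roots {Γ R : Type*} [AddCommGroup Γ] [LinearOrder Γ]
    [IsOrderedAddMonoid Γ] [CommRing R] [IsDomain R] {p : R⟦Γ⟧[X]} (hp : p.Splits)
    (h0 : p.coeff 0 ≠ 0) :
    (p.roots.map order).sum = (p.coeff 0).order - p.leadingCoeff.order := by
  have hp0 : p ≠ 0 := fun h => h0 (by simp [h])
  have hroots : (0 : R⟦Γ⟧) ∉ p.roots := by
    rwa [mem_roots hp0, IsRoot, ← coeff_zero_eq_eval_zero]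
  have hsign : (-1 : R⟦Γ⟧) ^ p.natDegree ≠ 0 := pow_ne_zero _ (neg_ne_zero.mpr one_ne_zero)
  have hlead : p.leadingCoeff ≠ 0 := leadingCoeff_ne_zero.mpr hp0
  rw [hp.coeff_zero_eq_leadingCoeff_mul_prod_roots,
    order_mul (mul_ne_zero hsign hlead) (Multiset.prod_ne_zero hroots), order_mul hsign hlead,
    order_multiset_prod hroots, order_pow, order_neg, order_one, smul_zero, zero_add,
    add_sub_cancel_left]

namespace Multiset

variable {ι : Type*} (s : Multiset ι) (f : ι → ℝ) {a b : ℝ}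

theorem card_filter_mul_sub_eq (hs : ∀ x ∈ s, f x = a ∨ f x = b) :
    (s.filter (f · = a)).card * (a - b) = (s.map f).sum - s.card * b := by
  induction s using Multiset.induction with
  | empty => simp
  | cons x s ih =>
    rw [forall_mem_cons] at hs
    have ih := ih hs.2
    rw [map_cons, sum_cons, card_cons]
    by_cases hx : f x = a
    · rw [filter_cons_of_pos (p := (f · = a)) s hx, card_cons]
      push_cast
      linarith
    · rw [filter_cons_of_neg (p := (f · = a)) s hx, hs.1.resolve_left hx]
      push_cast
      linarith

theorem card_filter_add_card_filter_eq (hab : a ≠ b) (hs : ∀ x ∈ s, f x = a ∨ f x = b) :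
    (s.filter (f · = a)).card + (s.filter (f · = b)).card = s.card := by
  conv_rhs => rw [← filter_add_not (fun x => f x = a) s, card_add]
  congr 2
  refine filter_congr fun x hx => ?_
  rcases hs x hx with h | h
  · simp [h, hab]
  · simp [h, hab.symm]

end Multiset

theorem Nat.mul_succ_eq_add_add_pred_mul {m : ℕ} (hm : m ≠ 0) (j : ℕ) :
    m * (j + 1) = m + j + (m - 1) * j := by
  obtain ⟨m, rfl⟩ := Nat.exists_eq_add_one_of_ne_zero hm
  rw [Nat.add_sub_cancel]
  ring

section CritPointPoly

variable {K : Type*} [CommRing K]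

/-- With `m = n - k`, `j = k + 1`, `c = s^{-λ}` and `t = s`, its roots are the critical points of
the superpotential of `(X_k^{2n}, ω_λ)`. -/
noncomputable def critPointPoly (m j : ℕ) (c t : K) : K[X] :=
  X ^ m * (X + Polynomial.C c * X ^ m) ^ j - Polynomial.C t

variable {m : ℕ} {c : K}

theorem coeff_zero_critPointPoly (hm : m ≠ 0) (j : ℕ) (t : K) :
    (critPointPoly m j c t).coeff 0 = -t := by
  simp [critPointPoly, coeff_zero_eq_eval_zero, hm]

theorem isRoot_critPointPoly_iff {j : ℕ} {t z : K} :
    (critPointPoly m j c t).IsRoot z ↔ z ^ m * (z + c * z ^ m) ^ j = t := by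
  simp [critPointPoly, sub_eq_zero]

theorem not_isRoot_zero_critPointPoly (hm : m ≠ 0) (j : ℕ) {t : K} (ht : t ≠ 0) :
    ¬ (critPointPoly m j c t).IsRoot 0 := by
  rwa [IsRoot.def, ← coeff_zero_eq_eval_zero, coeff_zero_critPointPoly hm, neg_eq_zero]

variable [IsDomain K]

theorem natDegree_X_add_C_mul_X_pow (hm : 2 ≤ m) (hc : c ≠ 0) :
    (X + Polynomial.C c * X ^ m : K[X]).natDegree = m := by
  rw [natDegree_add_eq_right_of_natDegree_lt] <;> rw [natDegree_C_mul_X_pow m c hc]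
  rw [natDegree_X]
  omega

theorem leadingCoeff_X_add_C_mul_X_pow (hm : 2 ≤ m) (hc : c ≠ 0) :
    (X + Polynomial.C c * X ^ m : K[X]).leadingCoeff = c := by
  rw [leadingCoeff_add_of_degree_lt, leadingCoeff_C_mul_X_pow]
  rw [degree_C_mul_X_pow m hc, degree_X]
  exact_mod_cast hm

theorem natDegree_X_pow_mul_X_add_C_mul_X_pow_pow (hm : 2 ≤ m) (hc : c ≠ 0) (j : ℕ) :
    (X ^ m * (X + Polynomial.C c * X ^ m) ^ j : K[X]).natDegree = m * (j + 1) := by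
  have hlin : (X + Polynomial.C c * X ^ m : K[X]) ≠ 0 := by
    intro h
    have := natDegree_X_add_C_mul_X_pow hm hc
    rw [h, natDegree_zero] at this
    omega
  rw [natDegree_mul (pow_ne_zero _ X_ne_zero) (pow_ne_zero _ hlin), natDegree_pow, natDegree_pow,
    natDegree_X, natDegree_X_add_C_mul_X_pow hm hc]
  ring

theorem natDegree_critPointPoly (hm : 2 ≤ m) (hc : c ≠ 0) (j : ℕ) (t : K) :
    (critPointPoly m j c t).natDegree = m * (j + 1) := by
  rw [critPointPoly, natDegree_sub_C, natDegree_X_pow_mul_X_add_C_mul_X_pow_pow hm hc]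

theorem leadingCoeff_critPointPoly (hm : 2 ≤ m) (hc : c ≠ 0) (j : ℕ) (t : K) :
    (critPointPoly m j c t).leadingCoeff = c ^ j := by
  have hdeg : 0 < (X ^ m * (X + Polynomial.C c * X ^ m) ^ j : K[X]).degree := by
    rw [← natDegree_pos_iff_degree_pos, natDegree_X_pow_mul_X_add_C_mul_X_pow_pow hm hc]
    positivity
  rw [critPointPoly, leadingCoeff_sub_of_degree_lt (degree_C_le.trans_lt hdeg),
    Polynomial.leadingCoeff_mul, leadingCoeff_pow, leadingCoeff_pow, leadingCoeff_X, one_pow,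
    one_mul, leadingCoeff_X_add_C_mul_X_pow hm hc]

end CritPointPoly

namespace HahnSeries

variable {R : Type*} [CommRing R] [IsDomain R] {m j : ℕ} {c t : R⟦ℝ⟧}

theorem order_eq_or_of_mem_roots_critPointPoly (hm : 2 ≤ m) (hc : c ≠ 0) (ht : t ≠ 0)
    (hregime : -c.order * (m + j) < (m - 1) * t.order) {z : R⟦ℝ⟧}
    (hz : z ∈ (critPointPoly m j c t).roots) :
    z.order = t.order / (m + j) ∨ z.order = -c.order / (m - 1) := by
  have hz0 : z ≠ 0 := by
    rintro rfl
    exact not_isRoot_zero_critPointPoly (by omega) j ht (isRoot_of_mem_roots hz)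
  have hm1 : (1 : ℝ) < m := by exact_mod_cast hm
  rw [eq_div_iff (by positivity), eq_div_iff (by linarith)]
  exact order_mul_eq_or_of_pow_mul_add_pow_eq hz0 hc ht hregime
    (isRoot_critPointPoly_iff.mp (isRoot_of_mem_roots hz))

theorem sum_order_roots_critPointPoly (hm : 2 ≤ m) (hc : c ≠ 0) (ht : t ≠ 0)
    (hsplits : (critPointPoly m j c t).Splits) :
    ((critPointPoly m j c t).roots.map order).sum = t.order + j * -c.order := by
  have hm0 : m ≠ 0 := by omega
  rw [hsplits.sum_order_roots (by rwa [coeff_zero_critPointPoly hm0, neg_ne_zero]),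
    coeff_zero_critPointPoly hm0, leadingCoeff_critPointPoly hm hc, order_neg, order_pow,
    nsmul_eq_mul]
  ring

theorem card_filter_order_roots_critPointPoly (hm : 2 ≤ m) (hc : c ≠ 0) (ht : t ≠ 0)
    (hregime : -c.order * (m + j) < (m - 1) * t.order)
    (hsplits : (critPointPoly m j c t).Splits) :
    ((critPointPoly m j c t).roots.filter (fun z => z.order = t.order / (m + j))).card = m + j ∧
    ((critPointPoly m j c t).roots.filter (fun z => z.order = -c.order / (m - 1))).card =
      (m - 1) * j := by
  have hm1 : (m : ℝ) - 1 ≠ 0 := by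
    have : (2 : ℝ) ≤ m := by exact_mod_cast hm
    linarith
  have horders := fun z => order_eq_or_of_mem_roots_critPointPoly (z := z) hm hc ht hregime
  have hαβ : t.order / (m + j) ≠ -c.order / (m - 1) := by
    rw [Ne, div_eq_div_iff (by positivity) hm1]
    linarith
  have hcard : (critPointPoly m j c t).roots.card = m * (j + 1) := by
    rw [← hsplits.natDegree_eq_card_roots, natDegree_critPointPoly hm hc]
  have hcount := Multiset.card_filter_mul_sub_eq _ _ horders
  rw [sum_order_roots_critPointPoly hm hc ht hsplits, hcard] at hcount
  have hA : ((critPointPoly m j c t).roots.filter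
      (fun z => z.order = t.order / (m + j))).card = m + j := by
    have : (_ : ℝ) = m + j := mul_right_cancel₀ (sub_ne_zero.mpr hαβ) <| by
      rw [hcount]
      field_simp
      push_cast
      ring
    exact_mod_cast this
  have hAB := Multiset.card_filter_add_card_filter_eq _ _ hαβ horders
  rw [hcard, Nat.mul_succ_eq_add_add_pred_mul (by omega), hA] at hAB
  exact ⟨hA, by omega⟩

end HahnSeries

theorem sPow_ne_zero (l : ℝ) : sPow l ≠ 0 := single_ne_zero one_ne_zero

theorem order_sPow (l : ℝ) : (sPow l).order = l := order_single one_ne_zero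

theorem newton_diagram_root_count_general (n k : ℕ) (hk : k + 2 ≤ n) (lam : ℝ)
    (hlam' : lam < ((n : ℝ) - k - 1) / ((n : ℝ) + 1))
    (Q : Polynomial GenLaurent)
    (hQ : Q = X ^ (n - k) * (X + Polynomial.C (sPow (-lam)) * X ^ (n - k)) ^ (k + 1) - Polynomial.C (sPow 1))
    (hsplits : Q.Splits) :
    (Q.roots.filter (fun z => z.order = 1 / ((n : ℝ) + 1))).card = n + 1 ∧
    (Q.roots.filter (fun z => z.order = lam / ((n : ℝ) - k - 1))).card = (n - k - 1) * (k + 1) ∧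
    Q.natDegree = (n - k) * (k + 2) ∧
    (n - k) * (k + 2) = (n + 1) + (n - k - 1) * (k + 1) ∧
    ¬ Q.IsRoot 0 := by
  replace hQ : Q = critPointPoly (n - k) (k + 1) (sPow (-lam)) (sPow 1) := hQ
  subst hQ
  have hm : 2 ≤ n - k := by omega
  have hmj : ((n - k : ℕ) : ℝ) + ((k + 1 : ℕ) : ℝ) = n + 1 := by
    push_cast [Nat.cast_sub (by omega : k ≤ n)]
    ring
  have hm1 : ((n - k : ℕ) : ℝ) - 1 = n - k - 1 := by
    push_cast [Nat.cast_sub (by omega : k ≤ n)]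
    ring
  have hregime : -(sPow (-lam)).order * ((n - k : ℕ) + (k + 1 : ℕ)) <
      ((n - k : ℕ) - 1) * (sPow 1).order := by
    rw [order_sPow, order_sPow, hmj, hm1, neg_neg, mul_one]
    exact (lt_div_iff₀ (by positivity)).mp hlam'
  obtain ⟨hA, hB⟩ := card_filter_order_roots_critPointPoly hm (sPow_ne_zero _) (sPow_ne_zero 1)
    hregime hsplits
  simp only [order_sPow, neg_neg, hmj, hm1] at hA hB
  refine ⟨hA.trans (by omega), hB.trans (by rw [Nat.sub_sub]),
    natDegree_critPointPoly hm (sPow_ne_zero _) _ _, ?_,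
    not_isRoot_zero_critPointPoly (by omega) _ (sPow_ne_zero 1)⟩
  rw [Nat.mul_succ_eq_add_add_pred_mul (by omega), show n - k + (k + 1) = n + 1 by omega]

/-- Newton diagram root count: in the regime `0 < λ < (n−k−1)/(n+1)`, the polynomial
`X^{n−k}(X + s^{−λ} X^{n−k})^{k+1} − s`, assumed to split over `K`, has exactly `n+1` roots of
order `1/(n+1)` and exactly `(n−k−1)(k+1)` roots of order `λ/(n−k−1)`, counted with
multiplicity; its degree is `(n−k)(k+2) = (n+1) + (n−k−1)(k+1)` and `0` is not a root. -/
theorem newton_diagram_root_count (n k : ℕ) (hk : k + 2 ≤ n) (lam : ℝ)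
    (hlam : 0 < lam) (hlam' : lam < ((n : ℝ) - k - 1) / ((n : ℝ) + 1))
    (Q : Polynomial GenLaurent)
    (hQ : Q = X ^ (n - k) * (X + Polynomial.C (sPow (-lam)) * X ^ (n - k)) ^ (k + 1) - Polynomial.C (sPow 1))
    (hsplits : Q.Splits) :
    (Q.roots.filter (fun z => z.order = 1 / ((n : ℝ) + 1))).card = n + 1 ∧
    (Q.roots.filter (fun z => z.order = lam / ((n : ℝ) - k - 1))).card = (n - k - 1) * (k + 1) ∧
    Q.natDegree = (n - k) * (k + 2) ∧
    (n - k) * (k + 2) = (n + 1) + (n - k - 1) * (k + 1) ∧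
    ¬ Q.IsRoot 0 :=
  newton_diagram_root_count_general n k hk lam hlam' Q hQ hsplits
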